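/- arXiv:1810.12390 — 2 statements merged into one kernel-verified Lean document; each statement's English description precedes it below -/
import Mathlib

section
/- Let C > 0 and let e : [0,∞) → [0,∞) be a continuous function satisfying e(t) + ∫_s^t e(τ) dτ ≤ C e(s) for all 0 ≤ s ≤ t. Then there exist constants M, ω > 0 (depending only on C) such that e(t) ≤ M e^{-ωt} e(0) for all t ≥ 0. -/
/-!
Discarding the integral gives `e t ≤ C e s`; feeding this back into the integral over
`[s, t]` gives `(1 + (t - s) / C) e t ≤ C e s`. After the time `T = 2 C²` the energy has
therefore at least halved, and iterating over the steps `[nT, (n + 1)T]` yields decay at the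
rate `log 2 / T`.
-/

open MeasureTheory intervalIntegral

theorem le_pow_mul_of_le_mul_shift {e : ℝ → ℝ} {q T : ℝ} (hq : 0 ≤ q) (hT : 0 ≤ T)
    (hstep : ∀ s, 0 ≤ s → e (s + T) ≤ q * e s) (n : ℕ) : e (n * T) ≤ q ^ n * e 0 := by
  induction n with
  | zero => simp
  | succ n ih =>
    calc e ((n + 1 : ℕ) * T) = e (n * T + T) := by push_cast; ring_nf
      _ ≤ q * e (n * T) := hstep _ (by positivity)
      _ ≤ q * (q ^ n * e 0) := mul_le_mul_of_nonneg_left ih hq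
      _ = q ^ (n + 1) * e 0 := by ring

theorem exists_exp_decay_of_le_mul_of_le_mul_shift {e : ℝ → ℝ} {K q T : ℝ} (hK : 0 < K)
    (hq₀ : 0 < q) (hq₁ : q < 1) (hT : 0 < T) (he₀ : 0 ≤ e 0)
    (hmono : ∀ s t, 0 ≤ s → s ≤ t → e t ≤ K * e s)
    (hstep : ∀ s, 0 ≤ s → e (s + T) ≤ q * e s) :
    ∃ M ω : ℝ, 0 < M ∧ 0 < ω ∧ ∀ t, 0 ≤ t → e t ≤ M * Real.exp (-ω * t) * e 0 := by
  refine ⟨K / q, -Real.log q / T, by positivity,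
    div_pos (neg_pos.2 (Real.log_neg hq₀ hq₁)) hT, fun t ht => ?_⟩
  set n := ⌊t / T⌋₊
  have hnT : n * T ≤ t := (le_div_iff₀ hT).1 (Nat.floor_le (by positivity))
  have hn : t / T - 1 ≤ n := by linarith [Nat.lt_floor_add_one (t / T)]
  calc e t ≤ K * e (n * T) := hmono _ _ (by positivity) hnT
    _ ≤ K * (q ^ n * e 0) :=
      mul_le_mul_of_nonneg_left (le_pow_mul_of_le_mul_shift hq₀.le hT.le hstep n) hK.le
    _ ≤ K * (q ^ (t / T - 1) * e 0) := by
      gcongr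
      rw [← Real.rpow_natCast]
      exact Real.rpow_le_rpow_of_exponent_ge hq₀ hq₁.le hn
    _ = K / q * Real.exp (-(-Real.log q / T) * t) * e 0 := by
      rw [Real.rpow_sub hq₀, Real.rpow_one, Real.rpow_def_of_pos hq₀]
      ring_nf

section EnergyInequality

variable {C : ℝ} {e : ℝ → ℝ}

theorem le_mul_of_add_integral_le (hnonneg : ∀ t, 0 ≤ t → 0 ≤ e t)
    (hineq : ∀ s t : ℝ, 0 ≤ s → s ≤ t → e t + ∫ τ in s..t, e τ ≤ C * e s)
    {s t : ℝ} (hs : 0 ≤ s) (hst : s ≤ t) : e t ≤ C * e s := by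
  have : 0 ≤ ∫ τ in s..t, e τ :=
    integral_nonneg hst fun τ hτ => hnonneg τ (hs.trans hτ.1)
  linarith [hineq s t hs hst]

/-- Since `e t ≤ C * e τ` for `τ ∈ [s, t]`, the integral is at least `(t - s) * e t / C`. -/
theorem one_add_div_mul_le_of_add_integral_le (hC : 0 < C)
    (hcont : ContinuousOn e (Set.Ici 0)) (hnonneg : ∀ t, 0 ≤ t → 0 ≤ e t)
    (hineq : ∀ s t : ℝ, 0 ≤ s → s ≤ t → e t + ∫ τ in s..t, e τ ≤ C * e s)
    {s t : ℝ} (hs : 0 ≤ s) (hst : s ≤ t) : (1 + (t - s) / C) * e t ≤ C * e s := by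
  have hint : IntervalIntegrable e volume s t :=
    (hcont.mono fun τ hτ => hs.trans (Set.uIcc_of_le hst ▸ hτ).1).intervalIntegrable
  have hlower : (t - s) * (e t / C) ≤ ∫ τ in s..t, e τ := by
    calc (t - s) * (e t / C) = ∫ _ in s..t, e t / C := by simp [mul_div_assoc]
      _ ≤ ∫ τ in s..t, e τ := integral_mono_on hst intervalIntegrable_const hint fun τ hτ =>
          (div_le_iff₀' hC).2 (le_mul_of_add_integral_le hnonneg hineq (hs.trans hτ.1) hτ.2)
  calc (1 + (t - s) / C) * e t = e t + (t - s) * (e t / C) := by ring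
    _ ≤ C * e s := by linarith [hineq s t hs hst]

end EnergyInequality

/-- Abstract barrier argument: an observability-type energy inequality implies
exponential decay. -/
theorem exp_decay_of_energy_observability
    (C : ℝ) (hC : 0 < C) (e : ℝ → ℝ)
    (hcont : ContinuousOn e (Set.Ici 0))
    (hnonneg : ∀ t, 0 ≤ t → 0 ≤ e t)
    (hineq : ∀ s t : ℝ, 0 ≤ s → s ≤ t → e t + ∫ τ in s..t, e τ ≤ C * e s) :
    ∃ M ω : ℝ, 0 < M ∧ 0 < ω ∧ ∀ t, 0 ≤ t → e t ≤ M * Real.exp (-ω * t) * e 0 := by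
  have hstep : ∀ s, 0 ≤ s → e (s + 2 * C ^ 2) ≤ 2⁻¹ * e s := fun s hs => by
    have h := one_add_div_mul_le_of_add_integral_le hC hcont hnonneg hineq hs
      (le_add_of_nonneg_right (by positivity : 0 ≤ 2 * C ^ 2))
    have hbarrier : 1 + (s + 2 * C ^ 2 - s) / C = 1 + 2 * C := by field_simp; ring
    rw [hbarrier] at h
    nlinarith [hnonneg (s + 2 * C ^ 2) (by positivity)]
  exact exists_exp_decay_of_le_mul_of_le_mul_shift hC (by norm_num) (by norm_num) (by positivity)
    (hnonneg 0 le_rfl) (fun s t => le_mul_of_add_integral_le hnonneg hineq) hstep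
end

section
/- Let c₅, c₆, C₁, C₂ > 0 and continuous nonnegative functions z, e on [0,T] satisfy for all 0 ≤ s ≤ t ≤ T: (i) z(t) + ∫_s^t z dτ ≤ c₅(z(s) + e(t) + z(t)²) + c₆ ∫_s^t (e + z^{3/2}) dτ, (ii) e(t) + ∫_s^t e dτ ≤ C₁ e(s) + C₂ ∫_s^t z^{3/2} dτ, and (iii) e(τ) ≤ z(τ) for all τ. Then there exists δ > 0 (depending only on the constants) such that if z(τ) ≤ δ² for all τ ∈ [0,T], then z(t) + ∫_s^t z(τ) dτ ≤ C z(s) for all 0 ≤ s ≤ t ≤ T, for a constant C depending only on c₅, c₆, C₁, C₂. -/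
open MeasureTheory intervalIntegral

lemma rpow_three_half_le_mul (x δ : ℝ) (hx : 0 ≤ x) (hδ : 0 < δ) (hxδ : x ≤ δ ^ 2) :
    x ^ ((3:ℝ)/2) ≤ δ * x := by
  rcases hx.eq_or_lt with h | h
  · rw [← h, Real.zero_rpow (by norm_num)]
    simp
  · have h1 : x ^ ((3:ℝ)/2) = x * x ^ ((1:ℝ)/2) := by
      rw [show (3:ℝ)/2 = 1 + 1/2 by norm_num, Real.rpow_add h, Real.rpow_one]
    have h2 : x ^ ((1:ℝ)/2) ≤ δ := by
      calc x ^ ((1:ℝ)/2) ≤ (δ ^ 2) ^ ((1:ℝ)/2) :=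
            Real.rpow_le_rpow hx hxδ (by norm_num)
        _ = δ := by
            rw [← Real.rpow_natCast δ 2, ← Real.rpow_mul hδ.le]
            norm_num
    rw [h1]
    nlinarith [mul_le_mul_of_nonneg_left h2 hx]

set_option maxHeartbeats 800000 in
/-- Absorption argument: if `z` satisfies the superlinear estimate (i), `e`
satisfies the observability estimate (ii), and `e ≤ z`, then there is `δ > 0`
(depending only on the constants) such that smallness `z ≤ δ²` implies
`z(t) + ∫_s^t z ≤ C z(s)` with `C` depending only on the constants. -/
theorem absorption_argument
    (c₅ c₆ C₁ C₂ : ℝ) (hc₅ : 0 < c₅) (hc₆ : 0 < c₆) (hC₁ : 0 < C₁) (hC₂ : 0 < C₂) :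
    ∃ δ : ℝ, 0 < δ ∧ ∃ C : ℝ, 0 < C ∧
      ∀ T : ℝ, 0 < T → ∀ z e : ℝ → ℝ,
        ContinuousOn z (Set.Icc 0 T) → ContinuousOn e (Set.Icc 0 T) →
        (∀ τ ∈ Set.Icc (0:ℝ) T, 0 ≤ z τ) → (∀ τ ∈ Set.Icc (0:ℝ) T, 0 ≤ e τ) →
        (∀ s t : ℝ, 0 ≤ s → s ≤ t → t ≤ T →
          z t + ∫ τ in s..t, z τ ≤
            c₅ * (z s + e t + z t ^ 2) + c₆ * ∫ τ in s..t, (e τ + z τ ^ ((3:ℝ)/2))) →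
        (∀ s t : ℝ, 0 ≤ s → s ≤ t → t ≤ T →
          e t + ∫ τ in s..t, e τ ≤ C₁ * e s + C₂ * ∫ τ in s..t, z τ ^ ((3:ℝ)/2)) →
        (∀ τ ∈ Set.Icc (0:ℝ) T, e τ ≤ z τ) →
        (∀ τ ∈ Set.Icc (0:ℝ) T, z τ ≤ δ ^ 2) →
        ∀ s t : ℝ, 0 ≤ s → s ≤ t → t ≤ T →
          z t + ∫ τ in s..t, z τ ≤ C * z s := by
  have hA : ∃ A : ℝ, A = c₅ + (c₅ + c₆) * C₁ := ⟨_, rfl⟩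
  obtain ⟨A, hA⟩ := hA
  have hB : ∃ B : ℝ, B = (c₅ + c₆) * C₂ + c₆ := ⟨_, rfl⟩
  obtain ⟨B, hB⟩ := hB
  have hApos : 0 < A := by rw [hA]; positivity
  have hBpos : 0 < B := by rw [hB]; positivity
  set δ := min 1 (min (2*B)⁻¹ (2*c₅)⁻¹) with hδdef
  have hδpos : 0 < δ := by positivity
  have hδ1 : δ ≤ 1 := min_le_left _ _
  have hδB : δ ≤ (2*B)⁻¹ := le_trans (min_le_right _ _) (min_le_left _ _)
  have hδc : δ ≤ (2*c₅)⁻¹ := le_trans (min_le_right _ _) (min_le_right _ _)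
  have hBδ : B * δ ≤ 1/2 := by
    have h : B * (2*B)⁻¹ = 1/2 := by field_simp
    nlinarith [mul_le_mul_of_nonneg_left hδB hBpos.le]
  have hcδ : c₅ * δ ^ 2 ≤ 1/2 := by
    have h : c₅ * (2*c₅)⁻¹ = 1/2 := by field_simp
    nlinarith [mul_le_mul_of_nonneg_left hδc hc₅.le, sq_nonneg δ, hδpos.le, hδ1]
  clear_value δ
  clear hδdef hδB hδc hδ1
  refine ⟨δ, hδpos, 2*A, by linarith, ?_⟩
  intro T hT z e hz he hznn henn hi hii hez hsmall s t hs hst htT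
  have hsub : Set.Icc s t ⊆ Set.Icc 0 T := Set.Icc_subset_Icc hs htT
  have hsT : s ∈ Set.Icc (0:ℝ) T := ⟨hs, hst.trans htT⟩
  have htTm : t ∈ Set.Icc (0:ℝ) T := ⟨hs.trans hst, htT⟩
  have hzc : ContinuousOn z (Set.Icc s t) := hz.mono hsub
  have hec : ContinuousOn e (Set.Icc s t) := he.mono hsub
  have hz32c : ContinuousOn (fun τ => z τ ^ ((3:ℝ)/2)) (Set.Icc s t) :=
    hzc.rpow_const (fun x _ => Or.inr (by norm_num))
  have hzint : IntervalIntegrable z volume s t := hzc.intervalIntegrable_of_Icc hst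
  have heint : IntervalIntegrable e volume s t := hec.intervalIntegrable_of_Icc hst
  have hz32int : IntervalIntegrable (fun τ => z τ ^ ((3:ℝ)/2)) volume s t :=
    hz32c.intervalIntegrable_of_Icc hst
  have hIz : (0:ℝ) ≤ ∫ τ in s..t, z τ :=
    intervalIntegral.integral_nonneg hst (fun u hu => hznn u (hsub hu))
  have hIe : (0:ℝ) ≤ ∫ τ in s..t, e τ :=
    intervalIntegral.integral_nonneg hst (fun u hu => henn u (hsub hu))
  have hKI : (∫ τ in s..t, z τ ^ ((3:ℝ)/2)) ≤ δ * ∫ τ in s..t, z τ := by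
    calc (∫ τ in s..t, z τ ^ ((3:ℝ)/2)) ≤ ∫ τ in s..t, δ * z τ :=
          intervalIntegral.integral_mono_on hst hz32int (hzint.const_mul δ)
            (fun u hu => rpow_three_half_le_mul (z u) δ (hznn u (hsub hu)) hδpos
              (hsmall u (hsub hu)))
      _ = δ * ∫ τ in s..t, z τ := intervalIntegral.integral_const_mul δ z
  have hsplit : (∫ τ in s..t, (e τ + z τ ^ ((3:ℝ)/2)))
      = (∫ τ in s..t, e τ) + ∫ τ in s..t, z τ ^ ((3:ℝ)/2) :=
    intervalIntegral.integral_add heint hz32int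
  have h1 := hi s t hs hst htT
  have h2 := hii s t hs hst htT
  rw [hsplit] at h1
  set I := ∫ τ in s..t, z τ
  set J := ∫ τ in s..t, e τ
  set K := ∫ τ in s..t, z τ ^ ((3:ℝ)/2)
  clear_value I J K
  have het : 0 ≤ e t := henn t htTm
  have hzt : 0 ≤ z t := hznn t htTm
  have hezs : e s ≤ z s := hez s hsT
  have hztδ : z t ≤ δ ^ 2 := hsmall t htTm
  -- c₅ * e t + c₆ * J ≤ (c₅+c₆) * (C₁ * e s + C₂ * K)
  have step1 : c₅ * e t + c₆ * J ≤ (c₅ + c₆) * (C₁ * e s + C₂ * K) := by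
    have e1 : (c₅ + c₆) * (e t + J) ≤ (c₅ + c₆) * (C₁ * e s + C₂ * K) :=
      mul_le_mul_of_nonneg_left h2 (by positivity)
    nlinarith [mul_nonneg hc₆.le het, mul_nonneg hc₅.le hIe]
  -- B * K ≤ (1/2) * I
  have step2 : B * K ≤ (1/2) * I := by
    have e3 : B * K ≤ B * (δ * I) := mul_le_mul_of_nonneg_left hKI hBpos.le
    have e4 : B * δ * I ≤ (1/2) * I := mul_le_mul_of_nonneg_right hBδ hIz
    rw [← mul_assoc] at e3
    exact e3.trans e4
  -- c₅ * z t ^ 2 ≤ (1/2) * z t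
  have step3 : c₅ * z t ^ 2 ≤ (1/2) * z t := by
    have e5 : z t * z t ≤ δ ^ 2 * z t := mul_le_mul_of_nonneg_right hztδ hzt
    have e6 : c₅ * (δ ^ 2 * z t) ≤ (1/2) * z t := by
      have := mul_le_mul_of_nonneg_right hcδ hzt
      linarith [mul_assoc c₅ (δ^2) (z t)]
    nlinarith [mul_le_mul_of_nonneg_left e5 hc₅.le]
  have hezs' : (c₅ + c₆) * C₁ * e s ≤ (c₅ + c₆) * C₁ * z s :=
    mul_le_mul_of_nonneg_left hezs (by positivity)
  -- combine everything
  have hBK : (c₅ + c₆) * (C₁ * e s + C₂ * K) + c₆ * K + c₅ * z t ^ 2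
      ≤ (c₅ + c₆) * C₁ * z s + (1/2) * I + (1/2) * z t := by
    have hBKeq : (c₅ + c₆) * C₂ * K + c₆ * K = B * K := by rw [hB]; ring
    linarith [step2, step3, hezs']
  have hfin : z t + I ≤ A * z s + (1/2) * I + (1/2) * z t := by
    rw [hA]
    linarith [h1, step1, hBK]
  linarith [hfin, hIz, hzt]
end
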